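/- arXiv:2212.04879 — 2 statements merged into one kernel-verified Lean document; each statement's English description precedes it below -/
import Mathlib

section
/- Let δ > 0 and η > 0 be such that every s ∈ ℂ satisfying f_{η,0}(s)² − f_{η,0}(s)·e^{−s} − 1 = 0 has Re(s) ≤ −ln 2 + δ. Then there exists ε₁ > 0 such that for every ε ∈ ℝ with |ε| < ε₁ and every s ∈ ℂ satisfying f_{η,ε}(s)² − f_{η,ε}(s)·e^{−s} − 1 = 0, one has Re(s) ≤ −ln 2 + 2δ. -/
/-- `λ₁(η,ε,s) = ((1+ε) + √((1+ε)²+4ηs))/(2η)`, principal branch of the complex square root. -/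
noncomputable def lam1 (η ε : ℝ) (s : ℂ) : ℂ :=
  ((1 + (ε : ℂ)) + ((1 + (ε : ℂ)) ^ 2 + 4 * (η : ℂ) * s) ^ ((1 : ℂ) / 2)) / (2 * (η : ℂ))

/-- `λ₂(η,ε,s) = ((1+ε) − √((1+ε)²+4ηs))/(2η)`. -/
noncomputable def lam2 (η ε : ℝ) (s : ℂ) : ℂ :=
  ((1 + (ε : ℂ)) - ((1 + (ε : ℂ)) ^ 2 + 4 * (η : ℂ) * s) ^ ((1 : ℂ) / 2)) / (2 * (η : ℂ))

/-- Perturbed transfer function of the viscous transport system with velocity `1 + ε`. -/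
noncomputable def f (η ε : ℝ) (s : ℂ) : ℂ :=
  (lam1 η ε s - lam2 η ε s) /
    (lam1 η ε s * Complex.exp (-(lam2 η ε s)) - lam2 η ε s * Complex.exp (-(lam1 η ε s)))
/-!
Write `c = 1 + ε`, `q` for the square root, so that `λ₁,₂ = (c ± q)/(2η)`, and `v = q/(2η)`.
Then `f = 2 / E` with `E = 2 e^{-c/(2η)} (cosh v + (c/(2η)) sinh v / v)`, which is even in `q`,
hence entire in `s` and jointly continuous in `(c, s)`; the characteristic equation becomes
`4 - 2 E e^{-s} - E² = 0` (away from `q = 0`, where `f` is `0`). In the half plane `Re s ≥ -ln 2`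
we have `|e^{-s}| ≤ 2`, while `|E| ≥ 5` for `|s|` large, uniformly in `c ∈ [0, 2]`; so no roots
escape to infinity. On the remaining compact piece of `Re s ≥ -ln 2 + 2δ` there are no roots for
`c = 1` (the point `q = 0` is checked by hand), and this persists for `c` near `1` by continuity.
-/

open Complex Topology

noncomputable def coshSqrt (w : ℂ) : ℂ := ∑' n : ℕ, w ^ n / (2 * n).factorial

noncomputable def sinhSqrtDivSqrt (w : ℂ) : ℂ := ∑' n : ℕ, w ^ n / (2 * n + 1).factorial

theorem continuous_tsum_pow_div_factorial {k : ℕ → ℕ} (hk : ∀ n, n ≤ k n) :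
    Continuous fun w : ℂ => ∑' n, w ^ n / (k n).factorial := by
  refine continuous_iff_continuousAt.2 fun w₀ => ?_
  have hcont : ∀ n, ContinuousOn (fun w : ℂ => w ^ n / (k n).factorial)
      (Metric.closedBall 0 (‖w₀‖ + 1)) := fun n => by fun_prop
  refine (continuousOn_tsum hcont (Real.summable_pow_div_factorial (‖w₀‖ + 1))
    fun n w hw => ?_).continuousAt (Metric.closedBall_mem_nhds_of_mem ?_)
  · rw [norm_div, norm_pow, Complex.norm_natCast]
    gcongr
    · exact mem_closedBall_zero_iff.1 hw
    · exact hk n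
  · simp

theorem coshSqrt_sq (v : ℂ) : coshSqrt (v ^ 2) = cosh v := by
  simp only [coshSqrt, cosh_eq_tsum, ← pow_mul]

theorem mul_sinhSqrtDivSqrt_sq (v : ℂ) : v * sinhSqrtDivSqrt (v ^ 2) = sinh v := by
  rw [sinhSqrtDivSqrt, ← tsum_mul_left, sinh_eq_tsum]
  simp only [← pow_mul, mul_div_assoc', ← pow_succ']

theorem coshSqrt_zero : coshSqrt 0 = 1 := by
  simpa using coshSqrt_sq 0

theorem sinhSqrtDivSqrt_zero : sinhSqrtDivSqrt 0 = 1 := by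
  rw [sinhSqrtDivSqrt, tsum_eq_single 0 fun n hn => by simp [hn]]
  simp

/-- The denominator of `f` divided by `(λ₁ - λ₂)/2`, written through even functions of the
square root: with `a = c/(2η)` and `v² = (c² + 4ηs)/(2η)²` it is `2 e^{-a} (cosh v + a sinh v / v)`. -/
noncomputable def fDenom (η c : ℝ) (s : ℂ) : ℂ :=
  2 * exp (-(c / (2 * η))) *
    (coshSqrt ((c ^ 2 + 4 * η * s) / (2 * η) ^ 2) +
      c / (2 * η) * sinhSqrtDivSqrt ((c ^ 2 + 4 * η * s) / (2 * η) ^ 2))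

noncomputable def charFun (η c : ℝ) (s : ℂ) : ℂ :=
  4 - 2 * fDenom η c s * exp (-s) - fDenom η c s ^ 2

theorem continuous_charFun (η : ℝ) : Continuous fun p : ℝ × ℂ => charFun η p.1 p.2 := by
  have hcosh : Continuous coshSqrt := continuous_tsum_pow_div_factorial fun n => by omega
  have hsinh : Continuous sinhSqrtDivSqrt :=
    continuous_tsum_pow_div_factorial fun n => by omega
  unfold charFun fDenom
  fun_prop

theorem mul_fDenom {η c : ℝ} (hη : η ≠ 0) {s q : ℂ} (hq : q ^ 2 = c ^ 2 + 4 * η * s) :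
    q * fDenom η c s =
      (c + q) * exp ((q - c) / (2 * η)) - (c - q) * exp (-(c + q) / (2 * η)) := by
  set a : ℂ := c / (2 * η)
  set v : ℂ := q / (2 * η)
  have h2η : (2 * η : ℂ) ≠ 0 := by exact_mod_cast mul_ne_zero two_ne_zero hη
  have hv : ((c : ℂ) ^ 2 + 4 * η * s) / (2 * η) ^ 2 = v ^ 2 := by rw [div_pow, hq]
  have e₁ : exp ((q - c) / (2 * η)) = exp (-a) * exp v := by
    rw [← exp_add]; congr 1; ring
  have e₂ : exp (-(c + q) / (2 * η)) = exp (-a) * exp (-v) := by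
    rw [← exp_add]; congr 1; ring
  rw [fDenom, hv, coshSqrt_sq, e₁, e₂]
  linear_combination (q * exp (-a)) * two_cosh v + (2 * c * exp (-a)) * mul_sinhSqrtDivSqrt_sq v
    + (c * exp (-a)) * two_sinh v

theorem f_eq_two_div_fDenom {η ε : ℝ} (hη : η ≠ 0) {s : ℂ}
    (hz : (1 + ε : ℂ) ^ 2 + 4 * η * s ≠ 0) : f η ε s = 2 / fDenom η (1 + ε) s := by
  set q := ((1 + ε : ℂ) ^ 2 + 4 * η * s) ^ ((1 : ℂ) / 2) with hq_def
  have hq : q ^ 2 = ((1 + ε : ℝ) : ℂ) ^ 2 + 4 * η * s := by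
    rw [hq_def, one_div, cpow_ofNat_inv_pow]; push_cast; rfl
  have hq0 : q ≠ 0 := by
    intro h
    rw [h] at hq
    exact hz (by push_cast at hq; rw [← hq]; simp)
  have h2η : (2 * η : ℂ) ≠ 0 := by exact_mod_cast mul_ne_zero two_ne_zero hη
  have hnum : lam1 η ε s - lam2 η ε s = 2 * q / (2 * η) := by
    rw [lam1, lam2, ← hq_def]; ring
  have hden : lam1 η ε s * exp (-lam2 η ε s) - lam2 η ε s * exp (-lam1 η ε s) =
      q * fDenom η (1 + ε) s / (2 * η) := by
    rw [mul_fDenom hη hq, lam1, lam2, ← hq_def]; push_cast; field_simp; ring_nf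
  rw [f, hnum, hden, div_div_div_cancel_right₀ h2η, mul_comm q, mul_div_mul_right _ _ hq0]

theorem sq_f_sub_f_mul_exp_sub_one_eq_zero_iff {η ε : ℝ} (hη : η ≠ 0) {s : ℂ} :
    f η ε s ^ 2 - f η ε s * exp (-s) - 1 = 0 ↔
      (1 + ε : ℂ) ^ 2 + 4 * η * s ≠ 0 ∧ charFun η (1 + ε) s = 0 := by
  by_cases hz : (1 + ε : ℂ) ^ 2 + 4 * η * s = 0
  · have hf : f η ε s = 0 := by simp [f, lam1, lam2, hz]
    simp [hf, hz]
  rw [f_eq_two_div_fDenom hη hz, charFun]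
  by_cases hE : fDenom η (1 + ε) s = 0
  · simp [hE, hz]
  have : (2 / fDenom η (1 + ε) s) ^ 2 - 2 / fDenom η (1 + ε) s * exp (-s) - 1 =
      charFun η (1 + ε) s / fDenom η (1 + ε) s ^ 2 := by
    rw [charFun]; field_simp; ring
  simp [this, hz, hE, charFun]

theorem five_le_norm_fDenom {η c : ℝ} (hη : 0 < η) (hc₀ : 0 ≤ c) (hc : c ≤ 2) {s q : ℂ}
    (hq : q ^ 2 = c ^ 2 + 4 * η * s) (hq_norm : 4 ≤ ‖q‖) (hq_re : 0 ≤ q.re)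
    (hexp : 13 ≤ Real.exp ((q.re - c) / (2 * η))) : 5 ≤ ‖fDenom η c s‖ := by
  have hcast : (2 * η : ℂ) = ((2 * η : ℝ) : ℂ) := by push_cast; rfl
  have hnorm_c : ‖(c : ℂ)‖ = c := by simp [hc₀]
  have h_add : ‖q‖ - c ≤ ‖(c : ℂ) + q‖ := by
    have := norm_sub_le ((c : ℂ) + q) c
    rw [add_sub_cancel_left, hnorm_c] at this
    linarith
  have h_sub : ‖(c : ℂ) - q‖ ≤ c + ‖q‖ := (norm_sub_le _ _).trans_eq (by rw [hnorm_c])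
  have h_decay : Real.exp (-(c + q.re) / (2 * η)) ≤ 1 :=
    Real.exp_le_one_iff.2 (div_nonpos_of_nonpos_of_nonneg (by linarith) (by positivity))
  have h : 5 * ‖q‖ ≤ ‖q‖ * ‖fDenom η c s‖ :=
    calc 5 * ‖q‖ ≤ (‖q‖ - c) * 13 - (c + ‖q‖) * 1 := by linarith
      _ ≤ ‖(c : ℂ) + q‖ * Real.exp ((q.re - c) / (2 * η)) -
            ‖(c : ℂ) - q‖ * Real.exp (-(c + q.re) / (2 * η)) := by
        gcongr
      _ = ‖(c + q) * exp ((q - c) / (2 * η))‖ - ‖(c - q) * exp (-(c + q) / (2 * η))‖ := by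
        simp only [norm_mul, norm_exp, hcast, div_ofReal_re, sub_re, neg_re, add_re, ofReal_re]
      _ ≤ ‖q * fDenom η c s‖ := by
        rw [mul_fDenom hη.ne' hq]
        exact norm_sub_norm_le _ _
      _ = ‖q‖ * ‖fDenom η c s‖ := norm_mul _ _
  exact le_of_mul_le_mul_left (by linarith) (by linarith : 0 < ‖q‖)

theorem Real.exp_le_one_add_two_mul {x : ℝ} (hx₀ : 0 ≤ x) (hx : x ≤ 1) :
    Real.exp x ≤ 1 + 2 * x :=
  (Real.exp_le_two_add_div_two_sub hx₀ (by linarith)).trans <|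
    (div_le_iff₀ (by linarith)).2 (by nlinarith)

theorem charFun_one_ne_zero {η : ℝ} (hη : 0 < η) {s : ℂ} (hz : (1 : ℂ) + 4 * η * s = 0)
    (hs : -Real.log 2 ≤ s.re) : charFun η 1 s ≠ 0 := by
  set a : ℝ := 1 / (2 * η) with ha
  have hs_eq : s = ((-(a / 2) : ℝ) : ℂ) := by
    have : (η : ℂ) ≠ 0 := by exact_mod_cast hη.ne'
    rw [ha]; push_cast; field_simp; linear_combination hz
  have ha_le : a / 2 ≤ Real.log 2 := by simpa [hs_eq] using hs
  have h_exp : Real.exp (a / 2) ≤ 1 + a := by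
    have := Real.exp_le_one_add_two_mul (x := a / 2) (by positivity)
      (ha_le.trans (Real.log_two_lt_d9.le.trans (by norm_num)))
    linarith
  set E : ℝ := 2 * Real.exp (-a) * (1 + a)
  have hE : fDenom η 1 s = E := by
    have hw : ((1 : ℝ) : ℂ) ^ 2 + 4 * η * s = 0 := by simpa using hz
    rw [fDenom, hw, zero_div, coshSqrt_zero, sinhSqrtDivSqrt_zero]
    push_cast [E, ha, ofReal_exp]
    ring
  have hEexp : 2 ≤ E * Real.exp (a / 2) := by
    have h_one : 1 ≤ (1 + a) * Real.exp (-(a / 2)) := by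
      rw [Real.exp_neg, ← div_eq_mul_inv, le_div_iff₀ (Real.exp_pos _)]
      linarith
    calc 2 ≤ 2 * ((1 + a) * Real.exp (-(a / 2))) := by linarith
      _ = 2 * (1 + a) * (Real.exp (-a) * Real.exp (a / 2)) := by
        rw [← Real.exp_add]; ring_nf
      _ = E * Real.exp (a / 2) := by ring
  have hE₀ : 0 < E := by positivity
  have : (4 - 2 * E * Real.exp (a / 2) - E ^ 2 : ℝ) ≠ 0 := by nlinarith
  rw [charFun, hE, hs_eq, ← ofReal_neg, neg_neg]
  exact_mod_cast this

theorem exists_five_le_norm_fDenom {η : ℝ} (hη : 0 < η) :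
    ∃ R : ℝ, ∀ c ∈ Set.Icc (0 : ℝ) 2, ∀ s : ℂ, -Real.log 2 ≤ s.re → R ≤ ‖s‖ →
      5 ≤ ‖fDenom η c s‖ := by
  set X : ℝ := 2 + 2 * η * Real.log 13
  have hX : 0 < X := by positivity
  have hlog2 : 0 ≤ Real.log 2 := Real.log_nonneg one_le_two
  refine ⟨(20 + 2 * X ^ 2 + 4 * η * Real.log 2) / (4 * η), fun c ⟨hc₀, hc⟩ s hs hR => ?_⟩
  set z : ℂ := c ^ 2 + 4 * η * s
  set q : ℂ := z ^ (2⁻¹ : ℂ)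
  have hq : q ^ 2 = c ^ 2 + 4 * η * s := cpow_ofNat_inv_pow z 2
  have hz_re : -(4 * η * Real.log 2) ≤ z.re := by
    have : z.re = c ^ 2 + 4 * η * s.re := by simp [z, sq]
    nlinarith
  have hz_norm : 16 + 2 * X ^ 2 + 4 * η * Real.log 2 ≤ ‖z‖ := by
    have h_tri : 4 * η * ‖s‖ ≤ ‖z‖ + c ^ 2 := by
      have := norm_sub_le z ((c : ℂ) ^ 2)
      simp only [z, add_sub_cancel_left, norm_mul, norm_pow, Complex.norm_real,
        Real.norm_eq_abs, sq_abs, abs_of_pos hη] at this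
      simpa using this
    have hs_big := (div_le_iff₀ (by positivity)).1 hR
    nlinarith
  have hq_norm : 4 ≤ ‖q‖ := by
    have : ‖q‖ ^ 2 = ‖z‖ := by rw [← norm_pow, hq]
    nlinarith [norm_nonneg q, sq_nonneg X, mul_nonneg hη.le hlog2]
  have hq_re : X ≤ q.re := by
    rw [cpow_inv_two_re, Real.le_sqrt' hX]
    linarith
  have hexp : 13 ≤ Real.exp ((q.re - c) / (2 * η)) := by
    rw [← Real.log_le_iff_le_exp (by norm_num), le_div_iff₀ (by positivity)]
    linarith
  exact five_le_norm_fDenom hη hc₀ hc hq hq_norm (hX.le.trans hq_re) hexp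

theorem four_sub_two_mul_mul_sub_sq_ne_zero {E w : ℂ} (hw : ‖w‖ ≤ 2) (hE : 5 ≤ ‖E‖) :
    4 - 2 * E * w - E ^ 2 ≠ 0 := by
  intro h
  have : ‖E‖ ^ 2 ≤ 4 + 4 * ‖E‖ :=
    calc ‖E‖ ^ 2 = ‖4 - 2 * E * w‖ := by rw [← norm_pow]; congr 1; linear_combination -h
      _ ≤ ‖(4 : ℂ)‖ + ‖2 * E * w‖ := norm_sub_le _ _
      _ ≤ 4 + 4 * ‖E‖ := by
        simp only [norm_mul, Complex.norm_ofNat]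
        nlinarith [norm_nonneg E]
  nlinarith

theorem norm_exp_neg_le_two {s : ℂ} (hs : -Real.log 2 ≤ s.re) : ‖exp (-s)‖ ≤ 2 := by
  rw [norm_exp, neg_re, ← Real.exp_log (two_pos : (0 : ℝ) < 2)]
  exact Real.exp_le_exp.2 (by linarith)

theorem eventually_forall_charFun_ne_zero {η σ : ℝ} (hη : 0 < η) (hσ : -Real.log 2 ≤ σ)
    (h₁ : ∀ s : ℂ, σ ≤ s.re → charFun η 1 s ≠ 0) :
    ∀ᶠ c in 𝓝 (1 : ℝ), ∀ s : ℂ, σ ≤ s.re → charFun η c s ≠ 0 := by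
  obtain ⟨R, hR⟩ := exists_five_le_norm_fDenom hη
  set K := {s : ℂ | σ ≤ s.re} ∩ Metric.closedBall 0 R
  have hK : IsCompact K :=
    (isCompact_closedBall 0 R).inter_left (isClosed_le continuous_const continuous_re)
  have h_near : ∀ᶠ c in 𝓝 (1 : ℝ), ∀ s ∈ K, charFun η c s ≠ 0 :=
    hK.eventually_forall_of_forall_eventually fun s hs =>
      (continuous_charFun η).continuousAt.eventually_ne (h₁ s hs.1)
  filter_upwards [h_near, Icc_mem_nhds (by norm_num : (0 : ℝ) < 1) (by norm_num : (1 : ℝ) < 2)]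
    with c h_compact hc s hs
  by_cases hsR : ‖s‖ ≤ R
  · exact h_compact s ⟨hs, by simpa using hsR⟩
  · exact four_sub_two_mul_mul_sub_sq_ne_zero (norm_exp_neg_le_two (hσ.trans hs))
      (hR c hc s (hσ.trans hs) (le_of_not_ge hsR))

theorem stmt_1 (δ η : ℝ) (hδ : 0 < δ) (hη : 0 < η)
    (hnom : ∀ s : ℂ, f η 0 s ^ 2 - f η 0 s * Complex.exp (-s) - 1 = 0 →
      s.re ≤ -Real.log 2 + δ) :
    ∃ ε₁ : ℝ, 0 < ε₁ ∧
      ∀ ε : ℝ, |ε| < ε₁ →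
        ∀ s : ℂ, f η ε s ^ 2 - f η ε s * Complex.exp (-s) - 1 = 0 →
          s.re ≤ -Real.log 2 + 2 * δ := by
  have h_nominal : ∀ s : ℂ, -Real.log 2 + 2 * δ ≤ s.re → charFun η 1 s ≠ 0 := by
    intro s hs h
    by_cases hz : (1 : ℂ) + 4 * η * s = 0
    · exact charFun_one_ne_zero hη hz (by linarith) h
    · have := hnom s ((sq_f_sub_f_mul_exp_sub_one_eq_zero_iff hη.ne').2
        ⟨by simpa using hz, by simpa using h⟩)
      linarith
  have h_ev := ((continuous_const_add (1 : ℝ)).tendsto' 0 1 (add_zero 1)).eventually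
    (eventually_forall_charFun_ne_zero hη (by linarith) h_nominal)
  obtain ⟨ε₁, hε₁, h_ball⟩ := Metric.eventually_nhds_iff.1 h_ev
  refine ⟨ε₁, hε₁, fun ε hε s hs => ?_⟩
  by_contra! h_lt
  exact h_ball (by simpa using hε) s h_lt.le ((sq_f_sub_f_mul_exp_sub_one_eq_zero_iff hη.ne').1 hs).2
end

section
/- For k₁ = 0 and k₂ = 1, the infimum, over all positive diagonal 3×3 matrices D, of the operator norm ‖D·K·D⁻¹‖₂ equals √2. -/
/-!
For `M = D K D⁻¹` Cauchy–Schwarz on row `i` and column `i`, each of norm at most `‖M‖`, gives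
`∑ⱼ |M i j| |M j i| ≤ ‖M‖²`. The products `M i j * M j i = K i j * K j i` do not depend on the
positive diagonal `D`, and for `i = 0` they sum to `2`, so `‖D K D⁻¹‖ ≥ √2` for every `D`.
The value `√2` is attained at `D = 1`, since `‖K x‖² = (x₁ - x₂)² + 2 x₀² ≤ 2 ‖x‖²`.
-/

/-- The operator norm of a `3 × 3` real matrix acting on Euclidean `ℝ³` (largest singular value). -/
noncomputable def opNorm2 (A : Matrix (Fin 3) (Fin 3) ℝ) : ℝ :=
  ‖Matrix.toEuclideanCLM (𝕜 := ℝ) A‖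

/-- The boundary coupling matrix `K` with `k₁ = 0` and `k₂ = 1`. -/
def Kmat : Matrix (Fin 3) (Fin 3) ℝ :=
  !![0, 1, -1; 1, 0, 0; 1, 0, 0]

open Matrix
open scoped Matrix.Norms.L2Operator

section L2OpNorm

variable {𝕜 m n : Type*} [RCLike 𝕜] [Fintype m] [Fintype n] [DecidableEq n]

lemma Matrix.sum_norm_sq_col_le_l2_opNorm_sq (A : Matrix m n 𝕜) (j : n) :
    ∑ i, ‖A i j‖ ^ 2 ≤ ‖A‖ ^ 2 := by
  have h := A.l2_opNorm_mulVec (EuclideanSpace.single j 1)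
  rw [PiLp.norm_single, norm_one, mul_one] at h
  have h2 := pow_le_pow_left₀ (norm_nonneg _) h 2
  rw [EuclideanSpace.norm_sq_eq] at h2
  simpa [EuclideanSpace.single, mulVec_single_one] using h2

lemma Matrix.sum_norm_sq_row_le_l2_opNorm_sq [DecidableEq m] (A : Matrix m n 𝕜) (i : m) :
    ∑ j, ‖A i j‖ ^ 2 ≤ ‖A‖ ^ 2 := by
  simpa [← l2_opNorm_conjTranspose A] using Aᴴ.sum_norm_sq_col_le_l2_opNorm_sq i

lemma Matrix.sum_norm_mul_norm_le_l2_opNorm_sq (A : Matrix n n 𝕜) (i : n) :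
    ∑ j, ‖A i j‖ * ‖A j i‖ ≤ ‖A‖ ^ 2 := by
  have hCS := Finset.sum_mul_sq_le_sq_mul_sq Finset.univ (fun j ↦ ‖A i j‖) (fun j ↦ ‖A j i‖)
  have hprod : (∑ j, ‖A i j‖ ^ 2) * (∑ j, ‖A j i‖ ^ 2) ≤ (‖A‖ ^ 2) ^ 2 := by
    rw [sq (‖A‖ ^ 2)]
    exact mul_le_mul (A.sum_norm_sq_row_le_l2_opNorm_sq i) (A.sum_norm_sq_col_le_l2_opNorm_sq i)
      (by positivity) (by positivity)
  exact abs_le_of_sq_le_sq (hCS.trans hprod) (by positivity) |>.trans' (le_abs_self _)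

lemma Matrix.inv_diagonal_eq {d : n → 𝕜} (hd : ∀ i, d i ≠ 0) : (diagonal d)⁻¹ = diagonal d⁻¹ :=
  inv_eq_left_inv <| by simp [diagonal_mul_diagonal, inv_mul_cancel₀ (hd _)]

lemma Matrix.diagonal_mul_mul_inv_diagonal_apply {d : n → 𝕜} (hd : ∀ i, d i ≠ 0)
    (A : Matrix n n 𝕜) (i j : n) :
    (diagonal d * A * (diagonal d)⁻¹) i j = d i * A i j / d j := by
  simp [inv_diagonal_eq hd, diagonal_mul, mul_diagonal, div_eq_mul_inv]

lemma Matrix.sum_norm_mul_norm_le_l2_opNorm_sq_diagonal_conj {d : n → 𝕜} (hd : ∀ i, d i ≠ 0)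
    (A : Matrix n n 𝕜) (i : n) :
    ∑ j, ‖A i j‖ * ‖A j i‖ ≤ ‖diagonal d * A * (diagonal d)⁻¹‖ ^ 2 := by
  refine le_of_eq_of_le (Finset.sum_congr rfl fun j _ ↦ ?_) (sum_norm_mul_norm_le_l2_opNorm_sq _ i)
  have hdi := norm_ne_zero_iff.mpr (hd i)
  have hdj := norm_ne_zero_iff.mpr (hd j)
  simp only [diagonal_mul_mul_inv_diagonal_apply hd, norm_div, norm_mul]
  field_simp

end L2OpNorm

lemma opNorm2_eq_l2_opNorm (A : Matrix (Fin 3) (Fin 3) ℝ) : opNorm2 A = ‖A‖ := rfl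

lemma sum_norm_mul_norm_Kmat : ∑ j, ‖Kmat 0 j‖ * ‖Kmat j 0‖ = 2 := by
  simp [Kmat, Fin.sum_univ_three, one_add_one_eq_two]

lemma Kmat_mulVec (v : Fin 3 → ℝ) : Kmat *ᵥ v = ![v 1 - v 2, v 0, v 0] := by
  ext i
  fin_cases i <;> simp [Kmat, mulVec, dotProduct, Fin.sum_univ_three, sub_eq_add_neg]

lemma sqrt_two_le_opNorm2_conj {D : Matrix (Fin 3) (Fin 3) ℝ} (hD : D.IsDiag)
    (hpos : ∀ i, 0 < D i i) : √2 ≤ opNorm2 (D * Kmat * D⁻¹) := by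
  have h := sum_norm_mul_norm_le_l2_opNorm_sq_diagonal_conj (d := D.diag) (fun i ↦ (hpos i).ne')
    Kmat 0
  rw [sum_norm_mul_norm_Kmat, hD.diagonal_diag] at h
  rw [opNorm2_eq_l2_opNorm]
  exact (Real.sqrt_le_left (norm_nonneg _)).mpr h

lemma opNorm2_Kmat_le : opNorm2 Kmat ≤ √2 := by
  refine (toEuclideanCLM (𝕜 := ℝ) Kmat).opNorm_le_bound (Real.sqrt_nonneg 2) fun x ↦ ?_
  rw [← Real.sqrt_sq (norm_nonneg _), ← Real.sqrt_sq (norm_nonneg x), ← Real.sqrt_mul zero_le_two]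
  refine Real.sqrt_le_sqrt ?_
  simp only [EuclideanSpace.norm_sq_eq, ofLp_toEuclideanCLM, Kmat_mulVec, Real.norm_eq_abs, sq_abs,
    Fin.sum_univ_three, cons_val_zero, cons_val_one, cons_val_two, head_cons, tail_cons]
  nlinarith [sq_nonneg (x 1 + x 2)]

theorem stmt_9 :
    sInf {x : ℝ | ∃ D : Matrix (Fin 3) (Fin 3) ℝ, D.IsDiag ∧ (∀ i, 0 < D i i) ∧
        x = opNorm2 (D * Kmat * D⁻¹)} = Real.sqrt 2 := by
  have hone : opNorm2 (1 * Kmat * 1⁻¹) = √2 :=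
    le_antisymm (by simpa using opNorm2_Kmat_le) (sqrt_two_le_opNorm2_conj isDiag_one (by simp))
  refine IsLeast.csInf_eq ⟨⟨1, isDiag_one, by simp, hone.symm⟩, ?_⟩
  rintro x ⟨D, hD, hpos, rfl⟩
  exact sqrt_two_le_opNorm2_conj hD hpos
end
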